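/- arXiv:1911.12542 — 2 statements merged into one kernel-verified Lean document; each statement's English description precedes it below -/
import Mathlib

section
/- For odd n ≥ 5 and any 1 ≤ i₁ ≤ ⋯ ≤ i_k ≤ (n−3)/2, the graph H₁(i₁,…,i_k) = C_n + v_{i₁}v_{n−i₁} + ⋯ + v_{i_k}v_{n−i_k} satisfies α(H₁(i₁,…,i_k)) = α(C_n). -/
open Matrix SimpleGraph

/-- The algebraic connectivity of `G`: the infimum of the Rayleigh quotients of the
Laplacian matrix over nonzero vectors orthogonal to the all-ones vector.  For a graph on
at least two vertices this is the second smallest eigenvalue of the Laplacian. -/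
noncomputable def algCon {V : Type*} [Fintype V] [DecidableEq V] (G : SimpleGraph V) : ℝ :=
  letI := Classical.decRel G.Adj
  sInf { r : ℝ | ∃ x : V → ℝ, x ≠ 0 ∧ (∑ v, x v) = 0 ∧
    r = (x ⬝ᵥ (G.lapMatrix ℝ *ᵥ x)) / (∑ v, (x v) ^ 2) }

/-- A graph is 2-connected if it has at least two vertices and every pair of distinct
vertices is joined by (at least) two internally disjoint paths. -/
def TwoConnected {V : Type*} (G : SimpleGraph V) : Prop :=
  (∃ u v : V, u ≠ v) ∧ ∀ u v : V, u ≠ v → ∃ p q : G.Walk u v, p.IsPath ∧ q.IsPath ∧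
    ∀ w, w ∈ p.support → w ∈ q.support → w = u ∨ w = v

/-- `G` is a θ-graph: it consists of three pairwise internally disjoint paths with common
endpoints `a ≠ b`, which together exhaust all vertices and all edges of `G`. -/
def IsThetaGraph {V : Type*} (G : SimpleGraph V) : Prop :=
  ∃ (a b : V) (p₁ p₂ p₃ : G.Walk a b), a ≠ b ∧ p₁.IsPath ∧ p₂.IsPath ∧ p₃.IsPath ∧
    (∀ w, w ∈ p₁.support → w ∈ p₂.support → w = a ∨ w = b) ∧
    (∀ w, w ∈ p₁.support → w ∈ p₃.support → w = a ∨ w = b) ∧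
    (∀ w, w ∈ p₂.support → w ∈ p₃.support → w = a ∨ w = b) ∧
    (∀ w : V, w ∈ p₁.support ∨ w ∈ p₂.support ∨ w ∈ p₃.support) ∧
    (∀ e, e ∈ G.edgeSet ↔ e ∈ p₁.edges ∨ e ∈ p₂.edges ∨ e ∈ p₃.edges)

/-- The cycle `C_n` on vertices `v₀, …, v_{n-1}` together with the chords
`v_{(f j).1} v_{(f j).2}` for `j = 1, …, k`. -/
def cyclePlusChords (n k : ℕ) (f : Fin k → ℕ × ℕ) : SimpleGraph (Fin n) :=
  SimpleGraph.cycleGraph n ⊔ SimpleGraph.fromEdgeSet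
    {e | ∃ (j : Fin k) (a b : Fin n), (a : ℕ) = (f j).1 ∧ (b : ℕ) = (f j).2 ∧ e = s(a, b)}

/-- `H₁(i₁,…,i_k) = C_n + v_{i₁}v_{n−i₁} + ⋯ + v_{i_k}v_{n−i_k}` (`n` odd); this is also
the graph `H₂(i₁,…,i_k)` when `n` is even. -/
def H12 (n k : ℕ) (i : Fin k → ℕ) : SimpleGraph (Fin n) :=
  cyclePlusChords n k (fun j => (i j, n - i j))

/-- `H₃(i₁,…,i_k) = C_n + v_{i₁}v_{n−i₁−1} + ⋯ + v_{i_k}v_{n−i_k−1}` (`n` even). -/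
def H3 (n k : ℕ) (i : Fin k → ℕ) : SimpleGraph (Fin n) :=
  cyclePlusChords n k (fun j => (i j, n - i j - 1))


/-!
Both sides equal `2 - 2 cos (2π/n)`.

Lower bound for the cycle (a discrete Wirtinger inequality): expand `x` in the characters `ψ` of
`Fin n`. The coefficient of `v ↦ x (v + 1) - x v` at `ψ` is `ψ (-1) - 1` times that of `x`,
and `‖ψ 1 - 1‖² = 2 - 2 Re (ψ 1) ≥ 2 - 2 cos (2π/n)` because `ψ 1 ≠ 1` is an `n`-th root of unity
whenever `ψ ≠ 0`; the coefficient at `ψ = 0` is `∑ x = 0`, and Parseval finishes.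

The bound is attained by the real part `v ↦ cos (2πv/n)` of a character, which is an eigenvector
of the Laplacian of `C_n`. Adding edges can only increase the Laplacian quadratic form, and this
eigenvector takes the same value at `v` and `-v`, the two ends of each chord `v_i v_{n-i}`, so its
Rayleigh quotient in `H₁` is still `2 - 2 cos (2π/n)`.
-/

open Finset Real

namespace AddChar

variable {A : Type*} [AddCommGroup A] [Fintype A]

theorem sum_norm_sq_sum_mul (x : A → ℂ) :
    ∑ ψ : AddChar A ℂ, ‖∑ a, x a * ψ a‖ ^ 2 = Fintype.card A * ∑ a, ‖x a‖ ^ 2 := by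
  classical
  apply Complex.ofReal_injective
  push_cast
  simp_rw [← Complex.mul_conj', map_sum, map_mul, ← map_neg_eq_conj, sum_mul_sum,
    sum_comm (γ := AddChar A ℂ)]
  have orthogonality (a b : A) :
      ∑ ψ : AddChar A ℂ, x a * ψ a * ((starRingEnd ℂ) (x b) * ψ (-b)) =
        x a * (starRingEnd ℂ) (x b) * if a = b then (Fintype.card A : ℂ) else 0 := by
    simp_rw [← sub_eq_zero (a := a), ← sum_apply_eq_ite, mul_sum, sub_eq_add_neg, map_add_eq_mul]
    exact sum_congr rfl fun ψ _ => by ring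
  simp_rw [orthogonality, mul_ite, mul_zero, sum_ite_eq, mem_univ, if_true, mul_sum]
  exact sum_congr rfl fun a _ => by ring

theorem sum_sub_shift_mul (x : A → ℂ) (s : A) (ψ : AddChar A ℂ) :
    ∑ a, (x (a + s) - x a) * ψ a = (ψ (-s) - 1) * ∑ a, x a * ψ a := by
  have hshift : ∑ a, x (a + s) * ψ a = ψ (-s) * ∑ a, x a * ψ a := by
    rw [mul_sum]
    refine Fintype.sum_equiv (Equiv.addRight s) _ _ fun a => ?_
    simp only [Equiv.coe_addRight, mul_left_comm (ψ (-s)), ← map_add_eq_mul,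
      neg_add_cancel_comm_assoc]
  simp_rw [sub_mul, one_mul, ← hshift, sum_sub_distrib]

theorem mul_sum_sq_le_sum_sub_shift_sq {c : ℝ} {s : A}
    (hc : ∀ ψ : AddChar A ℂ, ψ ≠ 0 → c ≤ ‖ψ s - 1‖ ^ 2) (x : A → ℝ) (hx : ∑ a, x a = 0) :
    c * ∑ a, x a ^ 2 ≤ ∑ a, (x (a + s) - x a) ^ 2 := by
  set F : AddChar A ℂ → ℂ := fun ψ => ∑ a, (x a : ℂ) * ψ a
  have hterm (ψ : AddChar A ℂ) : c * ‖F ψ‖ ^ 2 ≤ ‖ψ (-s) - 1‖ ^ 2 * ‖F ψ‖ ^ 2 := by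
    rcases eq_or_ne ψ 0 with rfl | hψ
    · simp [F, ← Complex.ofReal_sum, hx]
    refine mul_le_mul_of_nonneg_right ?_ (sq_nonneg _)
    rw [map_neg_eq_conj, ← map_one (starRingEnd ℂ), ← map_sub, Complex.norm_conj]
    exact hc ψ hψ
  have hdiff (ψ : AddChar A ℂ) :
      ∑ a, ((x (a + s) - x a : ℝ) : ℂ) * ψ a = (ψ (-s) - 1) * F ψ := by
    push_cast
    exact sum_sub_shift_mul (fun a => (x a : ℂ)) s ψ
  have hparseval := sum_norm_sq_sum_mul (fun a => ((x (a + s) - x a : ℝ) : ℂ))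
  have hparseval₀ := sum_norm_sq_sum_mul (fun a => (x a : ℂ))
  simp only [hdiff, norm_mul, mul_pow, Complex.norm_real, Real.norm_eq_abs, sq_abs]
    at hparseval hparseval₀
  refine le_of_mul_le_mul_left ?_ (show (0 : ℝ) < Fintype.card A by
    exact_mod_cast Fintype.card_pos)
  calc (Fintype.card A : ℝ) * (c * ∑ a, x a ^ 2) = ∑ ψ, c * ‖F ψ‖ ^ 2 := by
        rw [← mul_sum, hparseval₀]; ring
    _ ≤ ∑ ψ, ‖ψ (-s) - 1‖ ^ 2 * ‖F ψ‖ ^ 2 := sum_le_sum fun ψ _ => hterm ψ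
    _ = _ := hparseval

end AddChar

theorem Real.cos_two_pi_mul_div_le {i n : ℕ} (hi : 0 < i) (hin : i < n) :
    cos (2 * π * i / n) ≤ cos (2 * π / n) := by
  have hn : (0 : ℝ) < n := by exact_mod_cast hi.trans hin
  have hi' : (1 : ℝ) ≤ i := by exact_mod_cast hi
  have hin' : (i : ℝ) + 1 ≤ n := by exact_mod_cast hin
  have hstep : 2 * π / n ≤ 2 * π * i / n :=
    div_le_div_of_nonneg_right (by nlinarith [pi_pos]) hn.le
  rcases le_total (2 * π * i / n) π with hle | hle
  · exact cos_le_cos_of_nonneg_of_le_pi (by positivity) hle hstep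
  · rw [← cos_two_pi_sub]
    have hlow : 2 * π / n ≤ 2 * π - 2 * π * i / n := by
      rw [le_sub_iff_add_le, ← add_div, div_le_iff₀ hn]
      nlinarith [pi_pos]
    exact cos_le_cos_of_nonneg_of_le_pi (by positivity) (by linarith) hlow

theorem Complex.re_le_cos_of_pow_eq_one {n : ℕ} {z : ℂ} (hn : n ≠ 0) (hz : z ^ n = 1)
    (hz₁ : z ≠ 1) : z.re ≤ Real.cos (2 * π / n) := by
  have : NeZero n := ⟨hn⟩
  obtain ⟨i, hin, rfl⟩ := (isPrimitiveRoot_exp n hn).eq_pow_of_pow_eq_one hz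
  have hi : 0 < i := Nat.pos_of_ne_zero fun h => hz₁ (by rw [h, pow_zero])
  have harg : (i : ℂ) * (2 * π * I / n) = ((2 * π * i / n : ℝ) : ℂ) * I := by
    push_cast
    ring
  rw [← exp_nat_mul, harg, exp_ofReal_mul_I_re]
  exact Real.cos_two_pi_mul_div_le hi hin

namespace AddChar

def finChar (n : ℕ) [NeZero n] {ζ : ℂ} (hζ : ζ ^ n = 1) : AddChar (Fin n) ℂ where
  toFun j := ζ ^ (j : ℕ)
  map_zero_eq_one' := by simp
  map_add_eq_mul' a b := by rw [Fin.val_add, ← pow_eq_pow_mod _ hζ, pow_add]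

theorem finChar_apply {n : ℕ} [NeZero n] {ζ : ℂ} (hζ : ζ ^ n = 1) (j : Fin n) :
    finChar n hζ j = ζ ^ (j : ℕ) := rfl

variable {n : ℕ} [NeZero n]

open scoped Fin.CommRing in
theorem apply_one_pow_eq_one (ψ : AddChar (Fin n) ℂ) : ψ 1 ^ n = 1 := by
  rw [← map_nsmul_eq_pow, nsmul_eq_mul, mul_one, Fin.natCast_self, map_zero_eq_one]

open scoped Fin.CommRing in
theorem apply_one_ne_one {ψ : AddChar (Fin n) ℂ} (hψ : ψ ≠ 0) : ψ 1 ≠ 1 := by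
  obtain ⟨a, ha⟩ := ne_zero_iff.1 hψ
  intro h
  apply ha
  rw [← Fin.cast_val_eq_self a, ← mul_one (a.val : Fin n), ← nsmul_eq_mul, map_nsmul_eq_pow, h,
    one_pow]

theorem two_sub_two_cos_le_norm_sq_apply_one_sub_one {ψ : AddChar (Fin n) ℂ} (hψ : ψ ≠ 0) :
    2 - 2 * cos (2 * π / n) ≤ ‖ψ 1 - 1‖ ^ 2 := by
  have hre := Complex.re_le_cos_of_pow_eq_one (NeZero.ne n) (apply_one_pow_eq_one ψ)
    (apply_one_ne_one hψ)
  rw [← Complex.normSq_eq_norm_sq, Complex.normSq_sub, Complex.normSq_eq_norm_sq, norm_apply]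
  simp only [one_pow, map_one, mul_one]
  linarith

end AddChar

theorem Fin.two_sub_two_cos_mul_sum_sq_le {n : ℕ} [NeZero n] (x : Fin n → ℝ)
    (hx : ∑ j, x j = 0) :
    (2 - 2 * cos (2 * π / n)) * ∑ j, x j ^ 2 ≤ ∑ j, (x (j + 1) - x j) ^ 2 :=
  AddChar.mul_sum_sq_le_sum_sub_shift_sq
    (fun _ hψ => AddChar.two_sub_two_cos_le_norm_sq_apply_one_sub_one hψ) x hx

namespace SimpleGraph

section Laplacian

variable {V : Type*} [Fintype V] [DecidableEq V]

theorem dotProduct_lapMatrix_mulVec (G : SimpleGraph V) [DecidableRel G.Adj] (x : V → ℝ) :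
    x ⬝ᵥ (G.lapMatrix ℝ *ᵥ x) = (∑ i, ∑ j, if G.Adj i j then (x i - x j) ^ 2 else 0) / 2 := by
  rw [← toLinearMap₂'_apply', lapMatrix_toLinearMap₂']

variable {G H : SimpleGraph V} [DecidableRel G.Adj] [DecidableRel H.Adj]

theorem dotProduct_lapMatrix_mulVec_mono (hGH : G ≤ H) (x : V → ℝ) :
    x ⬝ᵥ (G.lapMatrix ℝ *ᵥ x) ≤ x ⬝ᵥ (H.lapMatrix ℝ *ᵥ x) := by
  simp only [dotProduct_lapMatrix_mulVec]
  gcongr with i _ j _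
  split_ifs with hG hH hH
  · rfl
  · exact absurd (hGH hG) hH
  · positivity
  · rfl

theorem dotProduct_lapMatrix_mulVec_eq_of_le (hGH : G ≤ H) {x : V → ℝ}
    (hx : ∀ u v, H.Adj u v → ¬G.Adj u v → x u = x v) :
    x ⬝ᵥ (H.lapMatrix ℝ *ᵥ x) = x ⬝ᵥ (G.lapMatrix ℝ *ᵥ x) := by
  simp only [dotProduct_lapMatrix_mulVec]
  congr 1
  refine sum_congr rfl fun u _ => sum_congr rfl fun v _ => ?_
  split_ifs with hH hG hG
  · rfl
  · rw [hx u v hH hG, sub_self, sq, mul_zero]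
  · exact absurd (hGH hG) hH
  · rfl

theorem algCon_eq_of_forall_le (G : SimpleGraph V) [DecidableRel G.Adj] {r : ℝ} {x₀ : V → ℝ}
    (hx₀ : x₀ ≠ 0) (hsum₀ : ∑ v, x₀ v = 0)
    (heq : x₀ ⬝ᵥ (G.lapMatrix ℝ *ᵥ x₀) = r * ∑ v, x₀ v ^ 2)
    (hle : ∀ x : V → ℝ, ∑ v, x v = 0 → r * ∑ v, x v ^ 2 ≤ x ⬝ᵥ (G.lapMatrix ℝ *ᵥ x)) :
    algCon G = r := by
  have hpos {x : V → ℝ} (hx : x ≠ 0) : 0 < ∑ v, x v ^ 2 := by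
    obtain ⟨v, hv⟩ := Function.ne_iff.1 hx
    exact sum_pos' (fun _ _ => sq_nonneg _) ⟨v, mem_univ v, pow_two_pos_of_ne_zero hv⟩
  have hleast : IsLeast { r : ℝ | ∃ x : V → ℝ, x ≠ 0 ∧ (∑ v, x v) = 0 ∧
      r = (x ⬝ᵥ (G.lapMatrix ℝ *ᵥ x)) / (∑ v, (x v) ^ 2) } r := by
    refine ⟨⟨x₀, hx₀, hsum₀, by rw [heq, mul_div_cancel_right₀ _ (hpos hx₀).ne']⟩, ?_⟩
    rintro _ ⟨x, hx, hsum, rfl⟩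
    exact (le_div_iff₀ (hpos hx)).2 (hle x hsum)
  rw [← hleast.csInf_eq]
  unfold algCon
  congr!

end Laplacian

section Cycle

variable {n : ℕ}

theorem cycleGraph_lapMatrix_mulVec_apply (x : Fin (n + 3) → ℝ) (v : Fin (n + 3)) :
    ((cycleGraph (n + 3)).lapMatrix ℝ *ᵥ x) v = 2 * x v - (x (v - 1) + x (v + 1)) := by
  have hne : v - 1 ≠ v + 1 := by
    simp only [ne_eq, sub_eq_iff_eq_add, add_assoc v, left_eq_add]
    -- `(1 + 1 : Fin (n + 3)) ≠ 0`, by evaluation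
    exact ne_of_beq_false rfl
  rw [lapMatrix_mulVec_apply, cycleGraph_degree_three_le, cycleGraph_neighborFinset,
    sum_pair hne, Nat.cast_ofNat]

theorem cycleGraph_dotProduct_lapMatrix_mulVec (x : Fin (n + 3) → ℝ) :
    x ⬝ᵥ ((cycleGraph (n + 3)).lapMatrix ℝ *ᵥ x) = ∑ v, (x (v + 1) - x v) ^ 2 := by
  have hsq : ∑ v, x (v + 1) ^ 2 = ∑ v, x v ^ 2 :=
    Fintype.sum_equiv (Equiv.addRight 1) _ _ fun _ => rfl
  have hprod : ∑ v, x v * x (v - 1) = ∑ v, x (v + 1) * x v :=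
    Fintype.sum_equiv (Equiv.subRight 1) _ _ fun v => by
      rw [Equiv.subRight_apply, sub_add_cancel]
  have hterm (v : Fin (n + 3)) : x v * (2 * x v - (x (v - 1) + x (v + 1))) =
      (x (v + 1) - x v) ^ 2 + (x v ^ 2 - x (v + 1) ^ 2) +
        (x (v + 1) * x v - x v * x (v - 1)) := by
    ring
  simp only [dotProduct, cycleGraph_lapMatrix_mulVec_apply, hterm, sum_add_distrib,
    sum_sub_distrib, hsq, hprod, sub_self, add_zero]

theorem two_sub_two_cos_mul_sum_sq_le_dotProduct_cycleGraph_lapMatrix_mulVec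
    (x : Fin (n + 3) → ℝ) (hx : ∑ v, x v = 0) :
    (2 - 2 * cos (2 * π / (n + 3 : ℕ))) * ∑ v, x v ^ 2 ≤
      x ⬝ᵥ ((cycleGraph (n + 3)).lapMatrix ℝ *ᵥ x) := by
  rw [cycleGraph_dotProduct_lapMatrix_mulVec]
  exact Fin.two_sub_two_cos_mul_sum_sq_le x hx

theorem cycleGraph_lapMatrix_mulVec_re_addChar (ψ : AddChar (Fin (n + 3)) ℂ) :
    (cycleGraph (n + 3)).lapMatrix ℝ *ᵥ (fun v => (ψ v).re) =
      (2 - 2 * (ψ 1).re) • fun v => (ψ v).re := by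
  ext v
  rw [cycleGraph_lapMatrix_mulVec_apply, Pi.smul_apply, smul_eq_mul, sub_eq_add_neg v,
    AddChar.map_add_eq_mul, AddChar.map_add_eq_mul, AddChar.map_neg_eq_conj]
  simp only [Complex.mul_re, Complex.conj_re, Complex.conj_im]
  ring

theorem exists_cycleGraph_eigvec (n : ℕ) :
    ∃ x : Fin (n + 3) → ℝ, x ≠ 0 ∧ ∑ v, x v = 0 ∧ (∀ v, x (-v) = x v) ∧
      x ⬝ᵥ ((cycleGraph (n + 3)).lapMatrix ℝ *ᵥ x) =
        (2 - 2 * cos (2 * π / (n + 3 : ℕ))) * ∑ v, x v ^ 2 := by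
  have hζ := Complex.isPrimitiveRoot_exp (n + 3) (by omega)
  set ψ := AddChar.finChar (n + 3) hζ.pow_eq_one
  have hψ₁ : ψ 1 = Complex.exp (2 * π * Complex.I / (n + 3 : ℕ)) := by
    rw [AddChar.finChar_apply, Fin.val_one, pow_one]
  have hre₁ : (ψ 1).re = cos (2 * π / (n + 3 : ℕ)) := by
    have harg : 2 * π * Complex.I / (n + 3 : ℕ) = ((2 * π / (n + 3 : ℕ) : ℝ) : ℂ) * Complex.I := by
      push_cast
      ring
    rw [hψ₁, harg, Complex.exp_ofReal_mul_I_re]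
  have hψ : ψ ≠ 0 := AddChar.ne_zero_iff.2 ⟨1, hψ₁ ▸ hζ.ne_one (by omega)⟩
  refine ⟨fun v => (ψ v).re, Function.ne_iff.2 ⟨0, by simp⟩, ?_, fun v => ?_, ?_⟩
  · rw [← Complex.re_sum, AddChar.sum_eq_zero_iff_ne_zero.2 hψ, Complex.zero_re]
  · dsimp only
    rw [AddChar.map_neg_eq_conj, Complex.conj_re]
  · rw [cycleGraph_lapMatrix_mulVec_re_addChar, dotProduct_smul, smul_eq_mul, hre₁, dotProduct]
    simp only [sq]

theorem algCon_cycleGraph (n : ℕ) :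
    algCon (cycleGraph (n + 3)) = 2 - 2 * cos (2 * π / (n + 3 : ℕ)) := by
  obtain ⟨x₀, hx₀, hsum₀, -, heq⟩ := exists_cycleGraph_eigvec n
  exact algCon_eq_of_forall_le _ hx₀ hsum₀ heq
    two_sub_two_cos_mul_sum_sq_le_dotProduct_cycleGraph_lapMatrix_mulVec

end Cycle

section H12

variable {n k : ℕ} (i : Fin k → ℕ)

theorem cycleGraph_le_H12 : cycleGraph n ≤ H12 n k i := le_sup_left

theorem dotProduct_lapMatrix_H12_mulVec [DecidableRel (H12 n k i).Adj] {x : Fin n → ℝ}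
    (hx : ∀ v, x (-v) = x v) :
    x ⬝ᵥ ((H12 n k i).lapMatrix ℝ *ᵥ x) = x ⬝ᵥ ((cycleGraph n).lapMatrix ℝ *ᵥ x) := by
  refine dotProduct_lapMatrix_mulVec_eq_of_le (cycleGraph_le_H12 i) fun u v huv hC => ?_
  obtain hC' | ⟨⟨j, a, b, ha, hb, he⟩, -⟩ := huv
  · exact absurd hC' hC
  have hab : b = -a := by
    ext
    rw [Fin.val_neg', hb, ha]
    have := b.isLt
    exact (Nat.mod_eq_of_lt (by omega)).symm
  rcases Sym2.eq_iff.1 he with ⟨rfl, rfl⟩ | ⟨rfl, rfl⟩ <;> rw [hab, hx]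

theorem algCon_H12 : algCon (H12 (n + 3) k i) = 2 - 2 * cos (2 * π / (n + 3 : ℕ)) := by
  classical
  obtain ⟨x₀, hx₀, hsum₀, heven, heq⟩ := exists_cycleGraph_eigvec n
  refine algCon_eq_of_forall_le _ hx₀ hsum₀ (heq ▸ dotProduct_lapMatrix_H12_mulVec i heven)
    fun x hx => ?_
  exact (two_sub_two_cos_mul_sum_sq_le_dotProduct_cycleGraph_lapMatrix_mulVec x hx).trans
    (dotProduct_lapMatrix_mulVec_mono (cycleGraph_le_H12 i) x)

end H12

end SimpleGraph

theorem algCon_H1_eq_cycle_general {n k : ℕ} (hn : 5 ≤ n) (i : Fin k → ℕ) :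
    algCon (H12 n k i) = algCon (SimpleGraph.cycleGraph n) := by
  obtain ⟨m, rfl⟩ : ∃ m, n = m + 3 := ⟨n - 3, by omega⟩
  rw [SimpleGraph.algCon_H12, SimpleGraph.algCon_cycleGraph]

theorem algCon_H1_eq_cycle {n k : ℕ} (hodd : Odd n) (hn : 5 ≤ n) (hk : 1 ≤ k)
    (i : Fin k → ℕ) (hmono : Monotone i) (hi : ∀ j, 1 ≤ i j ∧ i j ≤ (n - 3) / 2) :
    algCon (H12 n k i) = algCon (SimpleGraph.cycleGraph n) :=
  algCon_H1_eq_cycle_general hn i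
end

section
/- Let G be connected with Fiedler vector X attaining maximum at v_τ and minimum at v₀, and let H be a proper spanning subgraph of G obtained by replacing an edge v_a v_b (with x(v_a) < x(v_b)) by a path v_a u₁ ⋯ u_g v_b through vertices with x(v_a) < x(u₁) ≤ ⋯ ≤ x(u_g) ≤ x(v_b), g ≥ 1, keeping all other edges. If α(H) = α(G), then X is also a Fiedler vector of H; examining the eigenvalue equation at v_b yields a contradiction, so in fact α(H) < α(G). -/
/-!
Write `Q_K(x) = ∑_{ij ∈ E(K)} (x i - x j)^2` for the Laplacian quadratic form of `K`. The vector
`X` is not constant on the edge `ab`, so `α(G) ≠ 0` and hence `X ⊥ 1`. Since `X` is monotone along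
the path `a, u₀, …, u_{g-1}, b`, the squares of its increments add up to at most `(X b - X a)^2`,
so `Q_H(X) ≤ Q_G(X) = α(G) ‖X‖²`. If `α(H) ≥ α(G)`, then `X` minimises the Rayleigh quotient of
`H` on `1^⊥` and is therefore an eigenvector: `L_H X = α(G) X`. But at `b` the edge to `a` has
been traded for an edge to `u_{g-1}`, where `X a < X u_{g-1} ≤ X b`, so `(L_H X)(b) < (L_G X)(b)`.
-/

open Matrix SimpleGraph

theorem Nat.apply_zero_le_apply_pred_of_le_succ {α : Type*} [Preorder α] {f : ℕ → α} {n : ℕ}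
    (hf : ∀ j, j + 1 < n → f j ≤ f (j + 1)) : f 0 ≤ f (n - 1) := by
  induction n with
  | zero => exact le_rfl
  | succ n ih =>
    rcases Nat.eq_zero_or_pos n with rfl | hn
    · exact le_rfl
    · exact (ih fun j hj => hf j (by omega)).trans
        (by simpa [Nat.sub_add_cancel hn] using hf (n - 1) (by omega))

theorem Fintype.sum_sum_ite_sym2_eq {V M : Type*} [Fintype V] [DecidableEq V] [AddCommMonoid M]
    {p q : V} (hpq : p ≠ q) (f : V → V → M) :
    ∑ i, ∑ j, (if s(i, j) = s(p, q) then f i j else 0) = f p q + f q p := by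
  rw [Fintype.sum_eq_add p q hpq]
  · simp [hpq, hpq.symm]
  · intro i hi
    simp [hi.1, hi.2]

namespace Matrix.IsSymm

variable {V : Type*} [Fintype V] {A : Matrix V V ℝ}

theorem sum_mulVec_eq_zero (hA : A.IsSymm) (hA1 : A *ᵥ (fun _ => 1) = 0) (y : V → ℝ) :
    ∑ v, (A *ᵥ y) v = 0 := by
  rw [← one_dotProduct, dotProduct_mulVec, ← mulVec_transpose, hA.eq]
  exact hA1.symm ▸ zero_dotProduct y

theorem dotProduct_mulVec_comm (hA : A.IsSymm) (x y : V → ℝ) :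
    x ⬝ᵥ (A *ᵥ y) = y ⬝ᵥ (A *ᵥ x) := by
  rw [dotProduct_mulVec, ← mulVec_transpose, hA.eq, dotProduct_comm]

theorem mulVec_eq_smul_of_rayleigh_min (hA : A.IsSymm) (hA1 : A *ᵥ (fun _ => 1) = 0)
    {α : ℝ} (hmin : ∀ y : V → ℝ, ∑ v, y v = 0 → α * (y ⬝ᵥ y) ≤ y ⬝ᵥ (A *ᵥ y))
    {x : V → ℝ} (hx : ∑ v, x v = 0) (hxα : x ⬝ᵥ (A *ᵥ x) ≤ α * (x ⬝ᵥ x)) :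
    A *ᵥ x = α • x := by
  set r := A *ᵥ x - α • x with hr
  have hr_sum : ∑ v, r v = 0 := by
    simp [hr, Finset.sum_sub_distrib, ← Finset.mul_sum, hA.sum_mulVec_eq_zero hA1, hx]
  have hr_self : r ⬝ᵥ r = r ⬝ᵥ (A *ᵥ x) - α * (r ⬝ᵥ x) := by
    rw [hr, dotProduct_sub, dotProduct_smul, smul_eq_mul]
  -- `hmin` at `x + t • r` is a quadratic in `t` without constant term, so its linear
  -- coefficient `2 (r ⬝ᵥ r)` must vanish.
  have hquad : ∀ t : ℝ, 0 ≤ (r ⬝ᵥ (A *ᵥ r) - α * (r ⬝ᵥ r)) * (t * t) +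
      2 * (r ⬝ᵥ (A *ᵥ x) - α * (r ⬝ᵥ x)) * t + 0 := by
    intro t
    have h := hmin (x + t • r) (by simp [Finset.sum_add_distrib, ← Finset.mul_sum, hx, hr_sum])
    simp only [mulVec_add, mulVec_smul, dotProduct_add, add_dotProduct, dotProduct_smul,
      smul_dotProduct, smul_eq_mul, hA.dotProduct_mulVec_comm x r, dotProduct_comm x r] at h
    linarith
  have hdiscrim := discrim_le_zero hquad
  rw [discrim, ← hr_self] at hdiscrim
  have hr0 : r = 0 := dotProduct_self_eq_zero.mp (by nlinarith [sq_nonneg (r ⬝ᵥ r)])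
  rwa [hr, sub_eq_zero] at hr0

end Matrix.IsSymm

namespace SimpleGraph

variable {V : Type*}

def replaceEdgeWithPath (G : SimpleGraph V) (a b : V) (u : ℕ → V) (g : ℕ) : SimpleGraph V :=
  G.deleteEdges {s(a, b)} ⊔ fromEdgeSet
    ({s(a, u 0)} ∪ {e | ∃ j, j + 1 < g ∧ e = s(u j, u (j + 1))} ∪ {s(u (g - 1), b)})

theorem replaceEdgeWithPath_adj_right_iff (G : SimpleGraph V) {a b : V} (hab : a ≠ b)
    {u : ℕ → V} {g : ℕ} (hg : 1 ≤ g) (hub : ∀ j < g, u j ≠ b) (j : V) :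
    (G.replaceEdgeWithPath a b u g).Adj b j ↔ j = u (g - 1) ∨ (G.Adj b j ∧ j ≠ a) := by
  simp only [replaceEdgeWithPath, sup_adj, deleteEdges_adj, fromEdgeSet_adj, Set.mem_union,
    Set.mem_singleton_iff, Set.mem_ofPred_eq, Sym2.eq_iff]
  grind

variable [Fintype V]

open Classical in
noncomputable def dirichletEnergy (K : SimpleGraph V) (x : V → ℝ) : ℝ :=
  (∑ i, ∑ j, if K.Adj i j then (x i - x j) ^ 2 else 0) / 2

theorem dirichletEnergy_eq_sum (K : SimpleGraph V) [DecidableRel K.Adj] (x : V → ℝ) :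
    K.dirichletEnergy x = (∑ i, ∑ j, if K.Adj i j then (x i - x j) ^ 2 else 0) / 2 := by
  unfold dirichletEnergy
  congr!

theorem dotProduct_lapMatrix_mulVec_s18 [DecidableEq V] (K : SimpleGraph V) [DecidableRel K.Adj]
    (x : V → ℝ) : x ⬝ᵥ (K.lapMatrix ℝ *ᵥ x) = K.dirichletEnergy x := by
  rw [← toLinearMap₂'_apply', lapMatrix_toLinearMap₂', dirichletEnergy_eq_sum]

theorem dirichletEnergy_sup_le (K K' : SimpleGraph V) (x : V → ℝ) :
    (K ⊔ K').dirichletEnergy x ≤ K.dirichletEnergy x + K'.dirichletEnergy x := by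
  classical
  simp only [dirichletEnergy_eq_sum, ← add_div, ← Finset.sum_add_distrib]
  gcongr with i _ j _
  split_ifs <;> simp_all [sq_nonneg]

theorem dirichletEnergy_deleteEdges_add {K : SimpleGraph V} {p q : V} (hpq : K.Adj p q)
    (x : V → ℝ) :
    (K.deleteEdges {s(p, q)}).dirichletEnergy x + (x p - x q) ^ 2 = K.dirichletEnergy x := by
  classical
  have hsplit : ∀ i j, (if K.Adj i j then (x i - x j) ^ 2 else 0) =
      (if (K.deleteEdges {s(p, q)}).Adj i j then (x i - x j) ^ 2 else 0) +
        (if s(i, j) = s(p, q) then (x i - x j) ^ 2 else 0) := by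
    intro i j
    by_cases hij : s(i, j) = s(p, q)
    · have hK : K.Adj i j := by rwa [← mem_edgeSet, hij]
      simp [hK, hij]
    · simp [hij]
  simp only [dirichletEnergy_eq_sum, hsplit, Finset.sum_add_distrib,
    Fintype.sum_sum_ite_sym2_eq hpq.ne]
  ring

theorem dirichletEnergy_fromEdgeSet_singleton_le (p q : V) (x : V → ℝ) :
    (fromEdgeSet {s(p, q)}).dirichletEnergy x ≤ (x p - x q) ^ 2 := by
  classical
  by_cases hpq : p = q
  · subst hpq
    have hbot : (fromEdgeSet {s(p, p)} : SimpleGraph V) = ⊥ := by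
      ext i j
      simp only [fromEdgeSet_adj, Set.mem_singleton_iff, Sym2.eq_iff, bot_adj, iff_false]
      aesop
    simp [hbot, dirichletEnergy_eq_sum]
  · have hadj : ∀ i j, (fromEdgeSet {s(p, q)}).Adj i j ↔ s(i, j) = s(p, q) := by
      intro i j
      simp only [fromEdgeSet_adj, Set.mem_singleton_iff, Sym2.eq_iff, and_iff_left_iff_imp]
      aesop
    simp only [dirichletEnergy_eq_sum, hadj, Fintype.sum_sum_ite_sym2_eq hpq]
    nlinarith

theorem dirichletEnergy_fromEdgeSet_chain_le (w : ℕ → V) (m : ℕ) (x : V → ℝ) :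
    (fromEdgeSet {e | ∃ j < m, e = s(w j, w (j + 1))}).dirichletEnergy x ≤
      ∑ j ∈ Finset.range m, (x (w (j + 1)) - x (w j)) ^ 2 := by
  induction m with
  | zero => simp [dirichletEnergy]
  | succ m ih =>
    have hedges : {e | ∃ j < m + 1, e = s(w j, w (j + 1))} =
        {e | ∃ j < m, e = s(w j, w (j + 1))} ∪ {s(w m, w (m + 1))} := by
      ext e
      simp only [Set.mem_ofPred_eq, Set.mem_union, Set.mem_singleton_iff,
        Nat.lt_succ_iff_lt_or_eq, or_and_right, exists_or, exists_eq_left]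
    rw [hedges, fromEdgeSet_union, Finset.sum_range_succ]
    calc _ ≤ _ := dirichletEnergy_sup_le _ _ x
      _ ≤ _ := add_le_add ih (dirichletEnergy_fromEdgeSet_singleton_le _ _ x)
      _ = _ := by ring

theorem dirichletEnergy_fromEdgeSet_path_le_of_monotone (w : ℕ → V) (n : ℕ) {x : V → ℝ}
    (hmono : ∀ j, j + 1 < n → x (w j) ≤ x (w (j + 1))) :
    (fromEdgeSet {e | ∃ j, j + 1 < n ∧ e = s(w j, w (j + 1))}).dirichletEnergy x ≤
      (x (w (n - 1)) - x (w 0)) ^ 2 := by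
  have hedges : {e | ∃ j, j + 1 < n ∧ e = s(w j, w (j + 1))} =
      {e | ∃ j < n - 1, e = s(w j, w (j + 1))} := by
    ext e
    simp only [Set.mem_ofPred_eq, Nat.lt_sub_iff_add_lt]
  have htelescope := Finset.sum_range_sub (fun j => x (w j)) (n - 1)
  have hincr : ∀ j ∈ Finset.range (n - 1), 0 ≤ x (w (j + 1)) - x (w j) := fun j hj =>
    sub_nonneg.mpr (hmono j (by simp at hj; omega))
  calc _ ≤ ∑ j ∈ Finset.range (n - 1), (x (w (j + 1)) - x (w j)) ^ 2 := by
        rw [hedges]; exact dirichletEnergy_fromEdgeSet_chain_le w (n - 1) x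
    _ ≤ (∑ j ∈ Finset.range (n - 1), (x (w (j + 1)) - x (w j))) ^ 2 :=
        Finset.sum_sq_le_sq_sum_of_nonneg hincr
    _ = _ := by rw [htelescope]

theorem lapMatrix_mulVec_apply_eq_sum [DecidableEq V] (K : SimpleGraph V) [DecidableRel K.Adj]
    (x : V → ℝ) (v : V) : (K.lapMatrix ℝ *ᵥ x) v = ∑ j ∈ K.neighborFinset v, (x v - x j) := by
  rw [lapMatrix_mulVec_apply, Finset.sum_sub_distrib, Finset.sum_const,
    card_neighborFinset_eq_degree, nsmul_eq_mul]

theorem lapMatrix_mulVec_apply_lt_of_adj_iff [DecidableEq V] {G H : SimpleGraph V}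
    [DecidableRel G.Adj] [DecidableRel H.Adj] {x : V → ℝ} {v a w : V} (hva : G.Adj v a)
    (hadj : ∀ j, H.Adj v j ↔ j = w ∨ (G.Adj v j ∧ j ≠ a)) (haw : x a < x w) (hwv : x w ≤ x v) :
    (H.lapMatrix ℝ *ᵥ x) v < (G.lapMatrix ℝ *ᵥ x) v := by
  set N := (G.neighborFinset v).erase a
  have hN : H.neighborFinset v = insert w N := by
    ext j
    simp [N, hadj, and_comm]
  have hinsert : ∑ j ∈ insert w N, (x v - x j) ≤ (x v - x w) + ∑ j ∈ N, (x v - x j) := by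
    by_cases hw : w ∈ N
    · rw [Finset.insert_eq_of_mem hw]
      linarith
    · rw [Finset.sum_insert hw]
  rw [lapMatrix_mulVec_apply_eq_sum, lapMatrix_mulVec_apply_eq_sum, hN,
    ← Finset.add_sum_erase _ _ ((mem_neighborFinset G v a).mpr hva)]
  linarith

theorem dirichletEnergy_replaceEdgeWithPath_le {G : SimpleGraph V} {a b : V} (hab : G.Adj a b)
    (u : ℕ → V) (g : ℕ) {x : V → ℝ} (hstart : x a ≤ x (u 0))
    (hchain : ∀ j, j + 1 < g → x (u j) ≤ x (u (j + 1))) (hend : x (u (g - 1)) ≤ x b) :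
    (G.replaceEdgeWithPath a b u g).dirichletEnergy x ≤ G.dirichletEnergy x := by
  have hmid : x (u 0) ≤ x (u (g - 1)) :=
    Nat.apply_zero_le_apply_pred_of_le_succ (f := fun j => x (u j)) hchain
  rw [replaceEdgeWithPath, fromEdgeSet_union, fromEdgeSet_union,
    ← dirichletEnergy_deleteEdges_add hab]
  grw [dirichletEnergy_sup_le, dirichletEnergy_sup_le, dirichletEnergy_sup_le,
    dirichletEnergy_fromEdgeSet_singleton_le, dirichletEnergy_fromEdgeSet_singleton_le,
    dirichletEnergy_fromEdgeSet_path_le_of_monotone u g hchain]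
  nlinarith [mul_nonneg (sub_nonneg.2 hstart) (sub_nonneg.2 hmid),
    mul_nonneg (sub_nonneg.2 hstart) (sub_nonneg.2 hend),
    mul_nonneg (sub_nonneg.2 hmid) (sub_nonneg.2 hend)]

end SimpleGraph

theorem algCon_eq_sInf {V : Type*} [Fintype V] [DecidableEq V] (K : SimpleGraph V)
    [DecidableRel K.Adj] :
    algCon K = sInf {r : ℝ | ∃ x : V → ℝ, x ≠ 0 ∧ ∑ v, x v = 0 ∧
      r = x ⬝ᵥ (K.lapMatrix ℝ *ᵥ x) / (x ⬝ᵥ x)} := by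
  have hsq : ∀ y : V → ℝ, y ⬝ᵥ y = ∑ v, y v ^ 2 := fun y => by simp [dotProduct, sq]
  simp only [algCon, hsq]
  congr!

theorem algCon_mul_dotProduct_self_le {V : Type*} [Fintype V] [DecidableEq V] (K : SimpleGraph V)
    [DecidableRel K.Adj] {x : V → ℝ} (hx : ∑ v, x v = 0) :
    algCon K * (x ⬝ᵥ x) ≤ x ⬝ᵥ (K.lapMatrix ℝ *ᵥ x) := by
  rcases eq_or_ne x 0 with rfl | hx0
  · simp
  have hpos : 0 < x ⬝ᵥ x := by simpa using dotProduct_star_self_pos_iff.mpr hx0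
  rw [← le_div_iff₀ hpos, algCon_eq_sInf]
  refine csInf_le ⟨0, ?_⟩ ⟨x, hx0, hx, rfl⟩
  rintro r ⟨y, -, -, rfl⟩
  exact div_nonneg ((posSemidef_lapMatrix ℝ K).dotProduct_mulVec_nonneg y)
    (by simpa using dotProduct_star_self_nonneg y)

theorem algCon_strict_decrease_of_edge_subdivision_replacement_general
    {V : Type*} [Fintype V] [DecidableEq V]
    (G : SimpleGraph V) [DecidableRel G.Adj]
    (X : V → ℝ) (heig : G.lapMatrix ℝ *ᵥ X = algCon G • X)
    (a b : V) (hab : G.Adj a b) (hXab : X a < X b)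
    (g : ℕ) (hg : 1 ≤ g) (u : ℕ → V)
    (huab : ∀ j, j < g → u j ≠ a ∧ u j ≠ b)
    (hchain₀ : X a < X (u 0))
    (hchain : ∀ j, j + 1 < g → X (u j) ≤ X (u (j + 1)))
    (hchain₁ : X (u (g - 1)) ≤ X b)
    (H : SimpleGraph V)
    (hH : H = (G.deleteEdges {s(a, b)}) ⊔ SimpleGraph.fromEdgeSet
      ({s(a, u 0)} ∪ {e | ∃ j, j + 1 < g ∧ e = s(u j, u (j + 1))} ∪ {s(u (g - 1), b)})) :
    algCon H < algCon G := by
  classical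
  change H = G.replaceEdgeWithPath a b u g at hH
  subst hH
  have hα : algCon G ≠ 0 := by
    intro h0
    rw [h0, zero_smul, lapMatrix_mulVec_eq_zero_iff_forall_adj] at heig
    exact hXab.ne (heig a b hab)
  have hsum : ∑ v, X v = 0 := by
    have h := (isSymm_lapMatrix ℝ G).sum_mulVec_eq_zero (lapMatrix_mulVec_const_eq_zero G) X
    simpa [heig, ← Finset.mul_sum, hα] using h
  have henergy := dirichletEnergy_replaceEdgeWithPath_le hab u g hchain₀.le hchain hchain₁
  by_contra! hle
  have heigH : (G.replaceEdgeWithPath a b u g).lapMatrix ℝ *ᵥ X = algCon G • X := by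
    refine (isSymm_lapMatrix ℝ _).mulVec_eq_smul_of_rayleigh_min
      (lapMatrix_mulVec_const_eq_zero _) (fun y hy => ?_) hsum ?_
    · exact (mul_le_mul_of_nonneg_right hle (by simpa using dotProduct_star_self_nonneg y)).trans
        (algCon_mul_dotProduct_self_le _ hy)
    · rw [dotProduct_lapMatrix_mulVec_s18]
      grw [henergy, ← dotProduct_lapMatrix_mulVec_s18, heig, dotProduct_smul, smul_eq_mul]
  have hb := lapMatrix_mulVec_apply_lt_of_adj_iff hab.symm
    (replaceEdgeWithPath_adj_right_iff G hab.ne hg (fun j hj => (huab j hj).2))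
    (hchain₀.trans_le (Nat.apply_zero_le_apply_pred_of_le_succ (f := fun j => X (u j)) hchain))
    hchain₁
  rw [heig, heigH] at hb
  exact lt_irrefl _ hb

theorem algCon_strict_decrease_of_edge_subdivision_replacement
    {V : Type*} [Fintype V] [DecidableEq V]
    (G : SimpleGraph V) [DecidableRel G.Adj] (hG : G.Connected) (hn : 2 ≤ Fintype.card V)
    (X : V → ℝ) (hX : X ≠ 0) (heig : G.lapMatrix ℝ *ᵥ X = algCon G • X)
    (τ v₀ : V) (hmax : ∀ v, X v ≤ X τ) (hmin : ∀ v, X v₀ ≤ X v)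
    (a b : V) (hab : G.Adj a b) (hXab : X a < X b)
    (g : ℕ) (hg : 1 ≤ g) (u : ℕ → V)
    (huinj : ∀ j k, j < g → k < g → u j = u k → j = k)
    (huab : ∀ j, j < g → u j ≠ a ∧ u j ≠ b)
    (hchain₀ : X a < X (u 0))
    (hchain : ∀ j, j + 1 < g → X (u j) ≤ X (u (j + 1)))
    (hchain₁ : X (u (g - 1)) ≤ X b)
    (H : SimpleGraph V)
    (hH : H = (G.deleteEdges {s(a, b)}) ⊔ SimpleGraph.fromEdgeSet
      ({s(a, u 0)} ∪ {e | ∃ j, j + 1 < g ∧ e = s(u j, u (j + 1))} ∪ {s(u (g - 1), b)}))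
    (hproper : H ≠ G) :
    algCon H < algCon G :=
  algCon_strict_decrease_of_edge_subdivision_replacement_general G X heig a b hab hXab g hg u huab
    hchain₀ hchain hchain₁ H hH
end
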